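/- arXiv:1912.07324 — 7 statements merged into one kernel-verified Lean document; each statement's English description precedes it below -/
import Mathlib

section
/- Let ι be a nonempty finite type and let ρ : (ι → ℝ) → ℝ be a vector of weights. Then the set of values 𝒱_ρ = {ρ(σ) : σ ∈ ℤ≥0^ι} ⊆ ℝ has the same order type as ℤ≥0: there exists a strictly monotone bijection from ℕ onto 𝒱_ρ. -/
/-!
A weight vector is strictly monotone for the coordinatewise order, and each basis weight
`ρ (Pi.single i 1)` is positive, so a sublevel set `{σ ∈ ℕ^ι | ρ σ ≤ c}` lies in the box
`σ i ≤ c / ρ (Pi.single i 1)` and is finite. So the value set meets every ray `(-∞, c]` in a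
finite set, and it is infinite since it contains the values at the constant vectors. Such a subset
of a linear order is locally finite with a least element and no greatest one, hence order
isomorphic to `ℕ`.
-/

/-- A vector of weights on `ℝ^ι`: a linear map `ρ : (ι → ℝ) → ℝ` with `ρ(σ) > 0`
for every nonzero `σ` with all coordinates nonnegative. -/
def IsWeightVector {ι : Type*} (ρ : (ι → ℝ) →ₗ[ℝ] ℝ) : Prop :=
  ∀ σ : ι → ℝ, (∀ i, 0 ≤ σ i) → σ ≠ 0 → 0 < ρ σ

open Set

theorem Set.Infinite.exists_strictMono_range_eq {α : Type*} [LinearOrder α] {S : Set α}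
    (hS : S.Infinite) (hfin : ∀ c, (S ∩ Iic c).Finite) :
    ∃ f : ℕ → α, StrictMono f ∧ range f = S := by
  have hIic : ∀ c : S, (Iic c).Finite := fun c =>
    ((hfin c).preimage Subtype.val_injective.injOn).subset fun x hx => ⟨x.2, hx⟩
  let _ : LocallyFiniteOrder S :=
    LocallyFiniteOrder.ofFiniteIcc fun a b => (hIic b).subset Icc_subset_Iic_self
  let _ := LinearLocallyFiniteOrder.succOrder S
  let _ := LinearLocallyFiniteOrder.predOrder S
  have : NoMaxOrder S := ⟨fun a => by
    by_contra! h
    exact hS.to_subtype.not_finite (finite_univ_iff.mp ((hIic a).subset fun b _ => h b))⟩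
  obtain ⟨c⟩ : Nonempty S := hS.nonempty.to_subtype
  obtain ⟨m, -, hm⟩ := exists_min_image (Iic c) id (hIic c) ⟨c, le_rfl⟩
  let _ : OrderBot S :=
    { bot := m
      bot_le := fun x => (le_total x c).elim (hm x) fun hcx => (hm c le_rfl).trans hcx }
  let e : S ≃o ℕ := orderIsoNatOfLinearSuccPredArch
  refine ⟨Subtype.val ∘ e.symm, (Subtype.strictMono_coe _).comp e.symm.strictMono, ?_⟩
  rw [range_comp, e.symm.surjective.range_eq, image_univ, Subtype.range_coe]

namespace IsWeightVector

variable {ι : Type*} {ρ : (ι → ℝ) →ₗ[ℝ] ℝ}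

theorem strictMono (hρ : IsWeightVector ρ) : StrictMono ρ := fun σ τ hστ => by
  have := hρ (τ - σ) (fun i => sub_nonneg.2 (hστ.le i)) (sub_ne_zero.2 hστ.ne')
  rwa [map_sub, sub_pos] at this

theorem finite_setOf_natCast_le [Fintype ι] (hρ : IsWeightVector ρ) (c : ℝ) :
    {σ : ι → ℕ | ρ (fun i => σ i) ≤ c}.Finite := by
  classical
  refine (finite_Iic fun i => ⌈c / ρ (Pi.single i 1)⌉₊).subset fun σ hσ i => ?_
  have hwi : 0 < ρ (Pi.single i 1) :=
    hρ _ ((Pi.single_nonneg (α := fun _ => ℝ)).2 zero_le_one)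
      (Pi.single_ne_zero_iff.2 one_ne_zero)
  have hsingle : Pi.single i (σ i : ℝ) ≤ fun j => (σ j : ℝ) := fun j => by
    rcases eq_or_ne j i with rfl | hji <;> simp [*]
  have : (σ i : ℝ) * ρ (Pi.single i 1) ≤ c := calc
    (σ i : ℝ) * ρ (Pi.single i 1) = ρ (Pi.single i (σ i : ℝ)) := by
      rw [← smul_eq_mul, ← map_smul, ← Pi.single_smul', smul_eq_mul, mul_one]
    _ ≤ c := (hρ.strictMono.monotone hsingle).trans hσ
  exact Nat.cast_le.1 (((le_div_iff₀ hwi).2 this).trans (Nat.le_ceil _))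

theorem finite_range_natCast_inter_Iic [Fintype ι] (hρ : IsWeightVector ρ) (c : ℝ) :
    ((range fun σ : ι → ℕ => ρ fun i => (σ i : ℝ)) ∩ Iic c).Finite :=
  ((hρ.finite_setOf_natCast_le c).image _).subset <| by
    rintro _ ⟨⟨σ, rfl⟩, hc⟩
    exact ⟨σ, hc, rfl⟩

theorem infinite_range_natCast [Nonempty ι] (hρ : IsWeightVector ρ) :
    (range fun σ : ι → ℕ => ρ fun i => (σ i : ℝ)).Infinite :=
  (infinite_range_of_injective (hρ.strictMono.comp fun _ _ hmn =>
    Function.const_lt_const.2 (Nat.cast_lt.2 hmn)).injective).mono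
    (range_subset_iff.2 fun n => ⟨fun _ => n, rfl⟩)

end IsWeightVector

/-- For a vector of weights `ρ` on `ℝ^ι` (`ι` finite and nonempty),
the set of values `𝒱_ρ = ρ(ℤ≥0^ι)` has the order type of `ℤ≥0`: there is a
strictly monotone bijection from `ℕ` onto `𝒱_ρ`. -/
theorem weight_values_order_type_nat {ι : Type*} [Fintype ι] [Nonempty ι]
    (ρ : (ι → ℝ) →ₗ[ℝ] ℝ) (hρ : IsWeightVector ρ) :
    ∃ f : ℕ → ℝ, StrictMono f ∧
      Set.range f = {v : ℝ | ∃ σ : ι → ℕ, ρ (fun i => (σ i : ℝ)) = v} :=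
  hρ.infinite_range_natCast.exists_strictMono_range_eq hρ.finite_range_natCast_inter_Iic
end

section
/- Let ι be a finite type, S a nonempty subset of ℤ≥0^ι, and N(S) the associated Newton polyhedron. For any vector of weights ρ : (ι → ℝ) → ℝ, setting ν = min{ρ(σ) : σ ∈ S} (which exists), one has ρ(x) ≥ ν for every x ∈ N(S), and the value ν is attained on N(S); that is, the infimum of ρ on N(S) equals its minimum on S. -/
/-!
Since `ρ` is positive on the basis vectors `eᵢ`, the bound `σᵢ ρ(eᵢ) ≤ ρ(σ)` confines each
sublevel set of `ρ` on `ℕ^ι` to a box, so these sublevel sets are finite and `ρ` attains a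
minimum `ν` on `S`. The half-space `{ρ ≥ ν}` is convex and contains `S`, hence its convex hull,
and adding a vector of the nonnegative orthant does not decrease `ρ`.
-/

open Pointwise

/-- The Newton polyhedron of a set `S ⊆ ℤ≥0^ι`: the Minkowski sum of the convex
hull of `S` (viewed inside `ℝ^ι`) with the nonnegative orthant. -/
def newtonPolyhedron {ι : Type*} (S : Set (ι → ℕ)) : Set (ι → ℝ) :=
  convexHull ℝ ((fun σ : ι → ℕ => fun i => (σ i : ℝ)) '' S) + {x : ι → ℝ | ∀ i, 0 ≤ x i}

open Filter

namespace IsWeightVector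

variable {ι : Type*} {ρ : (ι → ℝ) →ₗ[ℝ] ℝ}

theorem apply_nonneg (hρ : IsWeightVector ρ) {x : ι → ℝ} (hx : ∀ i, 0 ≤ x i) : 0 ≤ ρ x := by
  rcases eq_or_ne x 0 with rfl | hx₀
  · simp
  · exact (hρ x hx hx₀).le

theorem apply_single_pos [DecidableEq ι] (hρ : IsWeightVector ρ) (i : ι) :
    0 < ρ (Pi.single i 1) :=
  hρ _ (fun j => by rw [Pi.single_apply]; split_ifs <;> norm_num) (by simp)

theorem mul_apply_single_le [DecidableEq ι] (hρ : IsWeightVector ρ) {x : ι → ℝ}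
    (hx : ∀ i, 0 ≤ x i) (i : ι) : x i * ρ (Pi.single i 1) ≤ ρ x := by
  have hrest : ∀ j, 0 ≤ (x - x i • Pi.single i 1 : ι → ℝ) j := fun j => by
    rcases eq_or_ne j i with rfl | hji
    · simp
    · simpa [hji] using hx j
  have hdiff := hρ.apply_nonneg hrest
  rw [map_sub, map_smul, smul_eq_mul] at hdiff
  linarith

theorem tendsto_cofinite_atTop [Finite ι] (hρ : IsWeightVector ρ) :
    Tendsto (fun σ : ι → ℕ => ρ (fun i => (σ i : ℝ))) cofinite atTop := by
  classical
  refine tendsto_atTop.2 fun r => eventually_cofinite.2 ?_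
  have hbox : {σ : ι → ℕ | ρ (fun i => (σ i : ℝ)) ≤ r} ⊆
      {σ | ∀ i, σ i ∈ Set.Iic ⌈r / ρ (Pi.single i 1)⌉₊} := fun σ hσ i => by
    have hi := (hρ.mul_apply_single_le (fun j => Nat.cast_nonneg (σ j)) i).trans hσ
    rw [← le_div_iff₀ (hρ.apply_single_pos i)] at hi
    exact Nat.cast_le.1 (hi.trans (Nat.le_ceil _))
  exact ((Set.Finite.pi' fun i => Set.finite_Iic _).subset hbox).subset
    fun σ hσ => (not_le.1 hσ).le

end IsWeightVector

theorem LinearMap.le_apply_of_mem_convexHull_add {E : Type*} [AddCommGroup E] [Module ℝ E]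
    (f : E →ₗ[ℝ] ℝ) {A C : Set E} {ν : ℝ} (hA : ∀ a ∈ A, ν ≤ f a) (hC : ∀ c ∈ C, 0 ≤ f c)
    {x : E} (hx : x ∈ convexHull ℝ A + C) : ν ≤ f x := by
  obtain ⟨y, hy, c, hc, rfl⟩ := hx
  have hy : ν ≤ f y := convexHull_min hA (convex_halfSpace_ge f.isLinear ν) hy
  rw [map_add]
  linarith [hC c hc]

theorem natCast_image_subset_newtonPolyhedron {ι : Type*} (S : Set (ι → ℕ)) :
    (fun σ : ι → ℕ => fun i => (σ i : ℝ)) '' S ⊆ newtonPolyhedron S :=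
  (subset_convexHull ℝ _).trans (Set.subset_add_left _ fun _ => le_rfl)

/-- For a nonempty `S ⊆ ℤ≥0^ι` and a vector of weights `ρ`, the
minimum `ν` of `ρ` on `S` exists, `ρ(x) ≥ ν` for every `x` in the Newton
polyhedron `N(S)`, and `ν` is attained on `N(S)`; i.e. the infimum of `ρ` on
`N(S)` equals its minimum on `S`. -/
theorem weight_min_on_newton_polyhedron {ι : Type*} [Fintype ι]
    (ρ : (ι → ℝ) →ₗ[ℝ] ℝ) (hρ : IsWeightVector ρ)
    (S : Set (ι → ℕ)) (hS : S.Nonempty) :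
    ∃ ν : ℝ, IsLeast ((fun σ : ι → ℕ => ρ (fun i => (σ i : ℝ))) '' S) ν ∧
      IsLeast (ρ '' newtonPolyhedron S) ν := by
  obtain ⟨σ₀, hσ₀, hmin⟩ := hρ.tendsto_cofinite_atTop.exists_within_forall_le hS
  refine ⟨_, ⟨Set.mem_image_of_mem _ hσ₀, Set.forall_mem_image.2 hmin⟩,
    Set.mem_image_of_mem ρ (natCast_image_subset_newtonPolyhedron S ⟨σ₀, hσ₀, rfl⟩), ?_⟩
  rintro _ ⟨x, hx, rfl⟩
  exact ρ.le_apply_of_mem_convexHull_add (Set.forall_mem_image.2 hmin)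
    (fun _ => hρ.apply_nonneg) hx
end

section
/- Let ι be a finite type, S a nonempty subset of ℤ≥0^ι, N(S) the associated Newton polyhedron, and ρ a vector of weights on ℝ^ι. Set ν = min{ρ(σ) : σ ∈ S} and F_ρ = {x ∈ N(S) : ρ(x) = ν}. Then F_ρ equals the convex hull of the finite set {σ ∈ S : ρ(σ) = ν}; in particular F_ρ is nonempty and compact. -/
open Pointwise

/-- With `ν = min ρ(S)` and `F_ρ = {x ∈ N(S) : ρ(x) = ν}`, the face
`F_ρ` equals the convex hull of the finite set `{σ ∈ S : ρ(σ) = ν}`; in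
particular `F_ρ` is nonempty and compact. -/
theorem face_eq_convexHull_of_min_points {ι : Type*} [Fintype ι]
    (ρ : (ι → ℝ) →ₗ[ℝ] ℝ) (hρ : IsWeightVector ρ)
    (S : Set (ι → ℕ)) (hS : S.Nonempty) (ν : ℝ)
    (hν : IsLeast ((fun σ : ι → ℕ => ρ (fun i => (σ i : ℝ))) '' S) ν) :
    {x ∈ newtonPolyhedron S | ρ x = ν} =
        convexHull ℝ {x ∈ (fun σ : ι → ℕ => fun i => (σ i : ℝ)) '' S | ρ x = ν} ∧
      Set.Finite {x ∈ (fun σ : ι → ℕ => fun i => (σ i : ℝ)) '' S | ρ x = ν} ∧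
      Set.Nonempty {x ∈ newtonPolyhedron S | ρ x = ν} ∧
      IsCompact {x ∈ newtonPolyhedron S | ρ x = ν} := by
  classical
  set e : (ι → ℕ) → (ι → ℝ) := fun σ => fun i => (σ i : ℝ) with he
  set T : Set (ι → ℝ) := e '' S with hTdef
  -- ρ ≥ ν on T
  have hT_ge : ∀ t ∈ T, ν ≤ ρ t := by
    rintro t ⟨σ, hσ, rfl⟩
    exact hν.2 ⟨σ, hσ, rfl⟩
  -- ρ ≥ ν on the convex hull of T
  have hhull_ge : ∀ y ∈ convexHull ℝ T, ν ≤ ρ y := by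
    intro y hy
    have : convexHull ℝ T ⊆ ρ ⁻¹' Set.Ici ν :=
      convexHull_min (fun t ht => hT_ge t ht) ((convex_Ici ν).linear_preimage ρ)
    exact this hy
  -- ρ ≥ 0 on the orthant
  have hρz : ∀ z : ι → ℝ, (∀ i, 0 ≤ z i) → 0 ≤ ρ z := by
    intro z hz
    rcases eq_or_ne z 0 with rfl | h
    · simp
    · exact (hρ z hz h).le
  have horth0 : (0 : ι → ℝ) ∈ {x : ι → ℝ | ∀ i, 0 ≤ x i} := fun i => le_refl 0
  -- membership of T-points in the Newton polyhedron
  have hTN : ∀ t ∈ T, t ∈ newtonPolyhedron S := by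
    intro t ht
    have := Set.add_mem_add (subset_convexHull ℝ T ht) horth0
    simpa [newtonPolyhedron, ← hTdef] using this
  -- Main equality
  have key : {x ∈ newtonPolyhedron S | ρ x = ν} = convexHull ℝ {x ∈ T | ρ x = ν} := by
    apply Set.Subset.antisymm
    · rintro x ⟨hxN, hxρ⟩
      rw [newtonPolyhedron, ← hTdef] at hxN
      obtain ⟨y, hy, z, hz, rfl⟩ := Set.mem_add.mp hxN
      have h1 : ν ≤ ρ y := hhull_ge y hy
      have h2 : 0 ≤ ρ z := hρz z hz
      have hsum : ρ y + ρ z = ν := by rw [← map_add]; exact hxρ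
      have hy' : ρ y = ν := by linarith
      have hz' : ρ z = 0 := by linarith
      have hz0 : z = 0 := by
        by_contra h
        exact (hρ z hz h).ne' hz'
      subst hz0
      rw [add_zero]
      -- y is a convex combination of points of T, all weights on ρ = ν points
      rw [convexHull_eq] at hy
      obtain ⟨κ, t, w, zf, hw0, hw1, hzs, hc⟩ := hy
      have hρy : ∑ i ∈ t, w i * ρ (zf i) = ν := by
        have : ρ (t.centerMass w zf) = ∑ i ∈ t, w i * ρ (zf i) := by
          rw [Finset.centerMass_eq_of_sum_1 _ _ hw1, map_sum]
          simp [smul_eq_mul]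
        rw [hc] at this
        rw [← this, hy']
      have hzero : ∑ i ∈ t, w i * (ρ (zf i) - ν) = 0 := by
        have : ∑ i ∈ t, w i * (ρ (zf i) - ν)
            = (∑ i ∈ t, w i * ρ (zf i)) - (∑ i ∈ t, w i) * ν := by
          rw [Finset.sum_mul, ← Finset.sum_sub_distrib]
          exact Finset.sum_congr rfl fun i _ => by ring
        rw [this, hρy, hw1, one_mul, sub_self]
      have hterm : ∀ i ∈ t, w i * (ρ (zf i) - ν) = 0 :=
        (Finset.sum_eq_zero_iff_of_nonneg fun i hi =>
          mul_nonneg (hw0 i hi) (sub_nonneg.mpr (hT_ge _ (hzs i hi)))).mp hzero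
      set t' : Finset κ := {i ∈ t | w i ≠ 0} with ht'
      have hsub : t' ⊆ t := Finset.filter_subset _ _
      have hsum' : ∑ i ∈ t', w i = 1 := by
        rw [ht', Finset.sum_filter_ne_zero]; exact hw1
      have hmem : ∀ i ∈ t', zf i ∈ {x ∈ T | ρ x = ν} := by
        intro i hi
        have hit := Finset.mem_filter.mp hi
        refine ⟨hzs i hit.1, ?_⟩
        rcases mul_eq_zero.mp (hterm i hit.1) with h | h
        · exact absurd h hit.2
        · linarith [sub_eq_zero.mp h]
      have hmemhull := Finset.centerMass_mem_convexHull t'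
        (fun i hi => hw0 i (hsub hi)) (by rw [hsum']; norm_num) hmem
      rwa [ht', Finset.centerMass_filter_ne_zero, hc] at hmemhull
    · apply convexHull_min
      · rintro x ⟨hxT, hxρ⟩
        exact ⟨hTN x hxT, hxρ⟩
      · have h1 : Convex ℝ (newtonPolyhedron S) := by
          rw [newtonPolyhedron]
          refine Convex.add (convex_convexHull ℝ _) ?_
          have : {x : ι → ℝ | ∀ i, 0 ≤ x i} = Set.pi Set.univ fun _ => Set.Ici (0 : ℝ) := by
            ext x; simp [Set.mem_pi, Pi.le_def]
          rw [this]
          exact convex_pi fun i _ => convex_Ici 0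
        have h2 : Convex ℝ (ρ ⁻¹' {ν}) := (convex_singleton ν).linear_preimage ρ
        exact h1.inter h2
  -- Finiteness
  have hfin : Set.Finite {x ∈ T | ρ x = ν} := by
    set c : ι → ℝ := fun i => ρ fun j => if i = j then 1 else 0 with hcdef
    have hcpos : ∀ i, 0 < c i := by
      intro i
      refine hρ _ (fun j => by by_cases h : i = j <;> simp [h]) ?_
      intro h
      have := congrFun h i
      simp at this
    set M : ι → ℕ := fun i => ⌈ν / c i⌉₊ with hM
    have hsubset : {x ∈ T | ρ x = ν} ⊆ e '' {σ : ι → ℕ | ∀ i, σ i ≤ M i} := by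
      rintro x ⟨⟨σ, hσS, rfl⟩, hxρ⟩
      refine ⟨σ, fun j => ?_, rfl⟩
      have hsum : ρ (e σ) = ∑ i, (σ i : ℝ) * c i := by
        rw [LinearMap.pi_apply_eq_sum_univ ρ (e σ)]
        simp [he, smul_eq_mul, hcdef]
      have hle : (σ j : ℝ) * c j ≤ ν := by
        rw [← hxρ, hsum]
        exact Finset.single_le_sum
          (f := fun i => (σ i : ℝ) * c i)
          (fun i _ => mul_nonneg (Nat.cast_nonneg _) (hcpos i).le)
          (Finset.mem_univ j)
      have hdiv : (σ j : ℝ) ≤ ν / c j := (le_div_iff₀ (hcpos j)).mpr hle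
      have : (σ j : ℝ) ≤ (⌈ν / c j⌉₊ : ℝ) := hdiv.trans (Nat.le_ceil _)
      exact_mod_cast this
    refine Set.Finite.subset (Set.Finite.image _ ?_) hsubset
    have : {σ : ι → ℕ | ∀ i, σ i ≤ M i} = Set.pi Set.univ fun i => Set.Iic (M i) := by
      ext σ; simp [Set.mem_pi, Pi.le_def]
    rw [this]
    exact Set.Finite.pi fun i => Set.finite_Iic _
  -- Nonemptiness
  have hne : Set.Nonempty {x ∈ newtonPolyhedron S | ρ x = ν} := by
    obtain ⟨σ, hσS, hσν⟩ := hν.1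
    exact ⟨e σ, hTN _ ⟨σ, hσS, rfl⟩, hσν⟩
  refine ⟨key, hfin, hne, ?_⟩
  rw [key]
  exact hfin.isCompact_convexHull (𝕜 := ℝ)
end

section
/- Let ι be a finite type, S a nonempty subset of ℤ≥0^ι, N(S) the associated Newton polyhedron, and ρ a vector of weights on ℝ^ι. Set ν = min{ρ(σ) : σ ∈ S} and F_ρ = {x ∈ N(S) : ρ(x) = ν}. Then F_ρ is a nonempty compact exposed face of N(S). -/
open Pointwise

/-!
On `N(S)` we have `ρ ≥ ν`, since `ρ ≥ ν` on `S` and `ρ ≥ 0` on the orthant. So a point `c + y` of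
the face, with `c` in the convex hull of `S` and `y` in the orthant, has `ρ y = 0`, hence `y = 0`.
A convex combination of points of `S` attains the minimum `ν` only if all its points of positive
weight do, so the face is the convex hull of the minimizing points of `S`. These are finitely many,
because `σ i * ρ(eᵢ) ≤ ρ(σ)` with `ρ(eᵢ) > 0`; hence the face is compact. It is exposed by `-ρ`.
-/

section Convex

variable {𝕜 E : Type*} [Field 𝕜] [LinearOrder 𝕜] [IsStrictOrderedRing 𝕜] [AddCommGroup E]
  [Module 𝕜 E] {s : Set E} {f : E →ₗ[𝕜] 𝕜} {ν : 𝕜}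

theorem le_of_mem_convexHull_of_forall_le (hs : ∀ z ∈ s, ν ≤ f z) {x : E}
    (hx : x ∈ convexHull 𝕜 s) : ν ≤ f x :=
  convexHull_min hs (convex_halfSpace_ge f.isLinear ν) hx

theorem convexHull_sep_eq_of_forall_le (hs : ∀ z ∈ s, ν ≤ f z) :
    convexHull 𝕜 {z ∈ s | f z = ν} = {x ∈ convexHull 𝕜 s | f x = ν} := by
  classical
  refine Set.Subset.antisymm (convexHull_min ?_ ?_) ?_
  · exact fun z hz => ⟨subset_convexHull 𝕜 s hz.1, hz.2⟩
  · exact (convex_convexHull 𝕜 s).inter (convex_hyperplane f.isLinear ν)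
  rintro _ ⟨hx, hfx⟩
  obtain ⟨κ, t, w, z, hw₀, hw₁, hz, rfl⟩ := (convexHull_eq s).subset hx
  have hle : ∀ i ∈ t, w i * ν ≤ w i * f (z i) := fun i hi =>
    mul_le_mul_of_nonneg_left (hs _ (hz i hi)) (hw₀ i hi)
  have hsum : ∑ i ∈ t, w i * ν = ∑ i ∈ t, w i * f (z i) := by
    rw [← Finset.sum_mul, hw₁, one_mul, ← hfx, Finset.centerMass_eq_of_sum_1 _ _ hw₁, map_sum]
    simp only [map_smul, smul_eq_mul]
  have hzν : ∀ i ∈ t, w i ≠ 0 → f (z i) = ν := fun i hi hwi =>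
    (mul_left_cancel₀ hwi ((Finset.sum_eq_sum_iff_of_le hle).1 hsum i hi)).symm
  rw [← Finset.centerMass_filter_ne_zero]
  refine Finset.centerMass_mem_convexHull _ (fun i hi => hw₀ i (Finset.mem_filter.1 hi).1)
    (by rw [Finset.sum_filter_ne_zero, hw₁]; exact one_pos) fun i hi => ?_
  obtain ⟨hi, hwi⟩ := Finset.mem_filter.1 hi
  exact ⟨hz i hi, hzν i hi hwi⟩

end Convex

theorem isExposed_sep_eq_of_mem_lowerBounds {𝕜 E : Type*} [TopologicalSpace 𝕜] [Ring 𝕜]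
    [PartialOrder 𝕜] [IsOrderedAddMonoid 𝕜] [IsTopologicalAddGroup 𝕜] [AddCommGroup E]
    [TopologicalSpace E] [Module 𝕜 E] {A : Set E} {l : StrongDual 𝕜 E} {ν : 𝕜} (hν : ν ∈ lowerBounds (l '' A)) :
    IsExposed 𝕜 A {x ∈ A | l x = ν} := by
  rintro ⟨x₀, hx₀, rfl⟩
  refine ⟨-l, Set.ext fun x => ⟨fun ⟨hx, hlx⟩ => ⟨hx, fun y hy => ?_⟩, fun ⟨hx, hmin⟩ => ⟨hx, ?_⟩⟩⟩
  · simpa [hlx] using hν ⟨y, hy, rfl⟩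
  · exact le_antisymm (by simpa using hmin x₀ hx₀) (hν ⟨x, hx, rfl⟩)

theorem natCast_mem_newtonPolyhedron {ι : Type*} {S : Set (ι → ℕ)} {σ : ι → ℕ} (hσ : σ ∈ S) :
    (fun i => (σ i : ℝ)) ∈ newtonPolyhedron S :=
  ⟨_, subset_convexHull ℝ _ (Set.mem_image_of_mem _ hσ), 0, fun _ => le_rfl, add_zero _⟩

namespace IsWeightVector

variable {ι : Type*} {ρ : (ι → ℝ) →ₗ[ℝ] ℝ}

theorem nonneg (hρ : IsWeightVector ρ) {y : ι → ℝ} (hy : 0 ≤ y) : 0 ≤ ρ y := by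
  rcases eq_or_ne y 0 with rfl | hy₀
  · rw [map_zero]
  · exact (hρ y hy hy₀).le

theorem mono (hρ : IsWeightVector ρ) {x y : ι → ℝ} (hxy : x ≤ y) : ρ x ≤ ρ y := by
  simpa using hρ.nonneg (sub_nonneg.2 hxy)

theorem eq_zero_of_map_eq_zero (hρ : IsWeightVector ρ) {y : ι → ℝ} (hy : 0 ≤ y)
    (hρy : ρ y = 0) : y = 0 := by
  by_contra hy₀
  exact (hρ y hy hy₀).ne' hρy

theorem finite_setOf_map_natCast_le [Finite ι] (hρ : IsWeightVector ρ) (c : ℝ) :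
    {σ : ι → ℕ | ρ (fun i => (σ i : ℝ)) ≤ c}.Finite := by
  classical
  have := Fintype.ofFinite ι
  have hpos : ∀ i, 0 < ρ (Pi.single i 1) := fun i =>
    hρ _ (Pi.single_nonneg.2 zero_le_one : (0 : ι → ℝ) ≤ _) (by simp)
  refine (Set.finite_Iic fun i => ⌊c / ρ (Pi.single i 1)⌋₊).subset fun σ hσ i => ?_
  refine Nat.le_floor ((le_div_iff₀ (hpos i)).2 ?_)
  have hsingle : Pi.single i (σ i : ℝ) ≤ fun j => (σ j : ℝ) := fun j => by
    rcases eq_or_ne j i with rfl | hji <;> simp [*]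
  calc (σ i : ℝ) * ρ (Pi.single i 1) = ρ (Pi.single i (σ i : ℝ)) := by
        rw [← smul_eq_mul, ← map_smul, ← Pi.single_smul, smul_eq_mul, mul_one]
    _ ≤ ρ (fun j => (σ j : ℝ)) := hρ.mono hsingle
    _ ≤ c := hσ

section NewtonPolyhedron

variable {S : Set (ι → ℕ)} {ν : ℝ} (hρ : IsWeightVector ρ)
  (hν : ν ∈ lowerBounds ((fun σ : ι → ℕ => ρ (fun i => (σ i : ℝ))) '' S))
include hρ hν

theorem lowerBounds_newtonPolyhedron : ν ∈ lowerBounds (ρ '' newtonPolyhedron S) := by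
  rintro _ ⟨_, ⟨c, hc, y, hy, rfl⟩, rfl⟩
  have hνc := le_of_mem_convexHull_of_forall_le (Set.forall_mem_image.2 fun σ hσ =>
    hν (Set.mem_image_of_mem _ hσ)) hc
  rw [map_add]
  linarith [hρ.nonneg hy]

theorem sep_newtonPolyhedron_eq_convexHull :
    {x ∈ newtonPolyhedron S | ρ x = ν} =
      convexHull ℝ {z ∈ (fun σ : ι → ℕ => fun i => (σ i : ℝ)) '' S | ρ z = ν} := by
  have hS : ∀ z ∈ (fun σ : ι → ℕ => fun i => (σ i : ℝ)) '' S, ν ≤ ρ z :=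
    Set.forall_mem_image.2 fun σ hσ => hν (Set.mem_image_of_mem _ hσ)
  rw [convexHull_sep_eq_of_forall_le hS]
  ext x
  constructor
  · rintro ⟨⟨c, hc, y, hy, rfl⟩, hx⟩
    rw [map_add] at hx
    have hνc := le_of_mem_convexHull_of_forall_le hS hc
    obtain rfl : y = 0 := hρ.eq_zero_of_map_eq_zero hy (by linarith [hρ.nonneg hy])
    simp only [map_zero, add_zero] at hx ⊢
    exact ⟨hc, hx⟩
  · rintro ⟨hc, hx⟩
    exact ⟨⟨x, hc, 0, fun _ => le_rfl, add_zero x⟩, hx⟩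

end NewtonPolyhedron

end IsWeightVector

theorem face_is_nonempty_compact_exposed_general {ι : Type*} [Fintype ι]
    (ρ : (ι → ℝ) →ₗ[ℝ] ℝ) (hρ : IsWeightVector ρ)
    (S : Set (ι → ℕ)) (ν : ℝ)
    (hν : IsLeast ((fun σ : ι → ℕ => ρ (fun i => (σ i : ℝ))) '' S) ν) :
    Set.Nonempty {x ∈ newtonPolyhedron S | ρ x = ν} ∧
      IsCompact {x ∈ newtonPolyhedron S | ρ x = ν} ∧
      IsExposed ℝ (newtonPolyhedron S) {x ∈ newtonPolyhedron S | ρ x = ν} := by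
  obtain ⟨σ₀, hσ₀, hσ₀ν⟩ := hν.1
  refine ⟨⟨_, natCast_mem_newtonPolyhedron hσ₀, hσ₀ν⟩, ?_, ?_⟩
  · rw [hρ.sep_newtonPolyhedron_eq_convexHull hν.2]
    refine (((hρ.finite_setOf_map_natCast_le ν).image
      fun σ : ι → ℕ => fun i => (σ i : ℝ)).subset ?_).isCompact_convexHull ℝ
    rintro _ ⟨⟨σ, -, rfl⟩, hσν⟩
    exact ⟨σ, hσν.le, rfl⟩
  · exact isExposed_sep_eq_of_mem_lowerBounds (l := LinearMap.toContinuousLinearMap ρ)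
      (hρ.lowerBounds_newtonPolyhedron hν.2)

/-- With `ν = min ρ(S)` and `F_ρ = {x ∈ N(S) : ρ(x) = ν}`, the set
`F_ρ` is a nonempty compact exposed face of `N(S)`. -/
theorem face_is_nonempty_compact_exposed {ι : Type*} [Fintype ι]
    (ρ : (ι → ℝ) →ₗ[ℝ] ℝ) (hρ : IsWeightVector ρ)
    (S : Set (ι → ℕ)) (hS : S.Nonempty) (ν : ℝ)
    (hν : IsLeast ((fun σ : ι → ℕ => ρ (fun i => (σ i : ℝ))) '' S) ν) :
    Set.Nonempty {x ∈ newtonPolyhedron S | ρ x = ν} ∧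
      IsCompact {x ∈ newtonPolyhedron S | ρ x = ν} ∧
      IsExposed ℝ (newtonPolyhedron S) {x ∈ newtonPolyhedron S | ρ x = ν} :=
  face_is_nonempty_compact_exposed_general ρ hρ S ν hν
end

section
/- Let ι be a finite type, S a nonempty subset of ℤ≥0^ι, and N(S) the associated Newton polyhedron. Then every extreme point of N(S) belongs to S. -/
open Pointwise

/-- Every extreme point of the Newton polyhedron `N(S)` belongs to
`S`. -/
theorem extremePoints_newtonPolyhedron_subset {ι : Type*} [Fintype ι]
    (S : Set (ι → ℕ)) (hS : S.Nonempty) :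
    ∀ x ∈ Set.extremePoints ℝ (newtonPolyhedron S),
      x ∈ (fun σ : ι → ℕ => fun i => (σ i : ℝ)) '' S := by
  intro x hx
  obtain ⟨hxN, hext⟩ := hx
  obtain ⟨c, hc, t, ht, rfl⟩ := hxN
  have hcN : c ∈ newtonPolyhedron S := ⟨c, hc, 0, fun i => le_refl 0, by simp⟩
  have h2N : c + (2 : ℝ) • t ∈ newtonPolyhedron S :=
    ⟨c, hc, (2 : ℝ) • t, fun i => by simpa using mul_nonneg (by norm_num : (0:ℝ) ≤ 2) (ht i), rfl⟩
  have hseg : c + t ∈ openSegment ℝ c (c + (2 : ℝ) • t) := by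
    refine ⟨1/2, 1/2, by norm_num, by norm_num, by norm_num, ?_⟩
    funext i
    simp [Pi.add_apply, Pi.smul_apply, smul_eq_mul]
    ring
  have hc' := (hext hcN h2N hseg)
  have ht0 : t = 0 := by
    have : c + t = c + 0 := by simpa using hc'.symm
    exact add_left_cancel this
  subst ht0
  simp only [add_zero] at hext ⊢
  have hsub : convexHull ℝ ((fun σ : ι → ℕ => fun i => (σ i : ℝ)) '' S) ⊆
      newtonPolyhedron S := fun y hy => ⟨y, hy, 0, fun i => le_refl 0, by simp⟩
  have : c ∈ Set.extremePoints ℝ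
      (convexHull ℝ ((fun σ : ι → ℕ => fun i => (σ i : ℝ)) '' S)) :=
    ⟨hc, fun x₁ h₁ x₂ h₂ h => hext (hsub h₁) (hsub h₂) h⟩
  exact extremePoints_convexHull_subset this
end

section
/- Let ι be a finite type, S a nonempty subset of ℤ≥0^ι, N(S) the associated Newton polyhedron, and σ₀ ∈ ℤ≥0^ι. Then the set of extreme points of N(S) equals {σ₀} (i.e., N(S) has σ₀ as its single vertex) if and only if σ₀ ∈ S and σ₀ ≤ σ componentwise for every σ ∈ S; moreover, in this case N(S) = σ₀ + {x ∈ ℝ^ι : x(i) ≥ 0 for all i}. -/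
open Pointwise

namespace NewtonAux

variable {ι : Type*}

/-- cast of a lattice point into `ℝ^ι`. -/
def cst (σ : ι → ℕ) : ι → ℝ := fun i => (σ i : ℝ)

lemma cst_inj {σ τ : ι → ℕ} (h : cst σ = cst τ) : σ = τ := by
  funext i
  have h2 : (σ i : ℝ) = (τ i : ℝ) := congrFun h i
  exact_mod_cast h2

/-- the minimum of the `i`-th coordinate over `S`. -/
noncomputable def minCoord (i : ι) (S : Set (ι → ℕ)) : ℕ :=
  sInf ((fun σ : ι → ℕ => σ i) '' S)

lemma minCoord_le {i : ι} {S : Set (ι → ℕ)} {σ : ι → ℕ} (hσ : σ ∈ S) :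
    minCoord i S ≤ σ i :=
  Nat.sInf_le ⟨σ, hσ, rfl⟩

/-- the set of elements of `S` minimizing the `i`-th coordinate. -/
noncomputable def minFace (i : ι) (S : Set (ι → ℕ)) : Set (ι → ℕ) :=
  {σ ∈ S | σ i = minCoord i S}

lemma minFace_subset {i : ι} {S : Set (ι → ℕ)} : minFace i S ⊆ S := fun _ h => h.1

lemma minFace_nonempty {i : ι} {S : Set (ι → ℕ)} (hS : S.Nonempty) :
    (minFace i S).Nonempty := by
  have h : minCoord i S ∈ (fun σ : ι → ℕ => σ i) '' S :=
    Nat.sInf_mem (hS.image _)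
  obtain ⟨σ, hσ, hσi⟩ := h
  exact ⟨σ, hσ, hσi⟩

/-- iterated coordinate minimization along a list of coordinates. -/
noncomputable def lexMinSet : List ι → Set (ι → ℕ) → Set (ι → ℕ)
  | [], S => S
  | i :: L, S => lexMinSet L (minFace i S)

lemma lexMinSet_subset : ∀ (L : List ι) (S : Set (ι → ℕ)), lexMinSet L S ⊆ S
  | [], _ => le_refl _
  | i :: L, S => (lexMinSet_subset L (minFace i S)).trans minFace_subset

lemma lexMinSet_nonempty : ∀ (L : List ι) {S : Set (ι → ℕ)}, S.Nonempty →
    (lexMinSet L S).Nonempty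
  | [], _, hS => hS
  | i :: L, S, hS => lexMinSet_nonempty L (minFace_nonempty hS)

lemma lexMinSet_coord_eq : ∀ (L : List ι) (S : Set (ι → ℕ)) {i : ι}, i ∈ L →
    ∀ σ ∈ lexMinSet L S, ∀ τ ∈ lexMinSet L S, σ i = τ i := by
  intro L
  induction L with
  | nil => intro S i hi; simp at hi
  | cons j L ih =>
    intro S i hi σ hσ τ hτ
    rcases List.mem_cons.1 hi with rfl | hi
    · have hσ' := (lexMinSet_subset L _ hσ).2
      have hτ' := (lexMinSet_subset L _ hτ).2
      rw [hσ', hτ']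
    · exact ih (minFace j S) hi σ hσ τ hτ

lemma combo_eq {a b p q c : ℝ} (ha : 0 < a) (hb : 0 < b) (hab : a + b = 1)
    (hp : c ≤ p) (hq : c ≤ q) (h : a * p + b * q = c) : p = c ∧ q = c := by
  have habc : a * c + b * c = c := by rw [← add_mul, hab, one_mul]
  have h1 : 0 ≤ a * (p - c) := mul_nonneg ha.le (by linarith)
  have h2 : 0 ≤ b * (q - c) := mul_nonneg hb.le (by linarith)
  have h3 : a * (p - c) + b * (q - c) = 0 := by
    have he : a * (p - c) + b * (q - c) = (a * p + b * q) - (a * c + b * c) := by ring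
    rw [he, h, habc, sub_self]
  have h4 : a * (p - c) = 0 := by linarith
  have h5 : b * (q - c) = 0 := by linarith
  constructor
  · rcases mul_eq_zero.1 h4 with h' | h'
    · exact absurd h' ha.ne'
    · linarith
  · rcases mul_eq_zero.1 h5 with h' | h'
    · exact absurd h' hb.ne'
    · linarith

lemma mem_newton_iff {S : Set (ι → ℕ)} {x : ι → ℝ} :
    x ∈ newtonPolyhedron S ↔
      ∃ c ∈ convexHull ℝ (cst '' S), ∃ u : ι → ℝ, (∀ i, 0 ≤ u i) ∧ x = c + u := by
  constructor
  · intro hx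
    rcases Set.mem_add.1 hx with ⟨c, hc, u, hu, h⟩
    exact ⟨c, hc, u, hu, h.symm⟩
  · rintro ⟨c, hc, u, hu, rfl⟩
    exact Set.mem_add.2 ⟨c, hc, u, hu, rfl⟩

lemma cst_mem_newton {S : Set (ι → ℕ)} {σ : ι → ℕ} (hσ : σ ∈ S) :
    cst σ ∈ newtonPolyhedron S := by
  refine mem_newton_iff.2 ⟨cst σ, subset_convexHull ℝ _ ⟨σ, hσ, rfl⟩, 0, fun i => le_refl 0, ?_⟩
  simp

lemma newton_mono {S T : Set (ι → ℕ)} (h : S ⊆ T) :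
    newtonPolyhedron S ⊆ newtonPolyhedron T := by
  intro x hx
  rcases mem_newton_iff.1 hx with ⟨c, hc, u, hu, rfl⟩
  exact mem_newton_iff.2 ⟨c, convexHull_mono (Set.image_mono (f := cst) h) hc, u, hu, rfl⟩

lemma hull_coord_ge {S : Set (ι → ℕ)} {c : ι → ℝ} (hc : c ∈ convexHull ℝ (cst '' S))
    (i : ι) : (minCoord i S : ℝ) ≤ c i := by
  have hsub : convexHull ℝ (cst '' S) ⊆ {y : ι → ℝ | (minCoord i S : ℝ) ≤ y i} := by
    apply convexHull_min
    · rintro _ ⟨σ, hσ, rfl⟩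
      show (minCoord i S : ℝ) ≤ (σ i : ℝ)
      exact_mod_cast minCoord_le hσ
    · exact convex_halfSpace_ge ⟨fun x y => rfl, fun a x => rfl⟩ _
  exact hsub hc

lemma newton_coord_ge {S : Set (ι → ℕ)} {x : ι → ℝ} (hx : x ∈ newtonPolyhedron S)
    (i : ι) : (minCoord i S : ℝ) ≤ x i := by
  rcases mem_newton_iff.1 hx with ⟨c, hc, u, hu, rfl⟩
  have := hull_coord_ge hc i
  have := hu i
  show (minCoord i S : ℝ) ≤ c i + u i
  linarith

/-- If a point of the hull attains the minimum of coordinate `i`, it lies in the hull of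
the face. -/
lemma hull_face {S : Set (ι → ℕ)} {c : ι → ℝ} {i : ι}
    (hc : c ∈ convexHull ℝ (cst '' S)) (hci : c i = (minCoord i S : ℝ)) :
    c ∈ convexHull ℝ (cst '' minFace i S) := by
  rw [convexHull_eq] at hc
  obtain ⟨κ, t, w, z, hw, hw1, hz, hcm⟩ := hc
  have hzi : ∀ j ∈ t, (minCoord i S : ℝ) ≤ z j i := by
    intro j hj
    obtain ⟨σ, hσ, hzj⟩ := hz j hj
    rw [← hzj]
    show (minCoord i S : ℝ) ≤ (σ i : ℝ)
    exact_mod_cast minCoord_le hσ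
  have hcsum : c = ∑ j ∈ t, w j • z j := by
    rw [← hcm, Finset.centerMass, hw1]
    simp
  have hcoord : c i = ∑ j ∈ t, w j * z j i := by
    rw [hcsum]
    simp [Finset.sum_apply]
  have hzero : ∑ j ∈ t, w j * (z j i - (minCoord i S : ℝ)) = 0 := by
    have heq2 : ∑ j ∈ t, w j * (z j i - (minCoord i S : ℝ))
        = (∑ j ∈ t, w j * z j i) - (∑ j ∈ t, w j) * (minCoord i S : ℝ) := by
      simp only [mul_sub]
      rw [Finset.sum_sub_distrib, Finset.sum_mul]
    rw [heq2, hw1, ← hcoord, hci]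
    ring
  have hterm : ∀ j ∈ t, w j * (z j i - (minCoord i S : ℝ)) = 0 :=
    (Finset.sum_eq_zero_iff_of_nonneg
      (fun j hj => mul_nonneg (hw j hj) (by linarith [hzi j hj]))).1 hzero
  -- restrict to nonzero weights
  have hmem : ∀ j ∈ t.filter (fun j => w j ≠ 0), z j ∈ cst '' minFace i S := by
    intro j hj
    rw [Finset.mem_filter] at hj
    obtain ⟨hjt, hjw⟩ := hj
    obtain ⟨σ, hσ, hzj⟩ := hz j hjt
    have h0 := hterm j hjt
    have hzi0 : z j i = (minCoord i S : ℝ) := by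
      rcases mul_eq_zero.1 h0 with h | h
      · exact absurd h hjw
      · linarith
    have hσi : (σ i : ℝ) = (minCoord i S : ℝ) := by
      rw [show ((σ i : ℝ)) = z j i from congrFun hzj i]; exact hzi0
    have : σ i = minCoord i S := by exact_mod_cast hσi
    exact ⟨σ, ⟨hσ, this⟩, hzj⟩
  have hfil : (t.filter (fun j => w j ≠ 0)).centerMass w z = c := by
    rw [Finset.centerMass_filter_ne_zero, hcm]
  rw [← hfil]
  apply Finset.centerMass_mem_convexHull
  · intro j hj; exact hw j (Finset.mem_filter.1 hj).1
  · rw [Finset.sum_filter_ne_zero, hw1]; exact zero_lt_one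
  · exact hmem

/-- step lemma: if a proper convex combination of two points of `N(S)` attains the minimal
`i`-th coordinate, then both points lie in `N(minFace i S)`. -/
lemma step {S : Set (ι → ℕ)} {i : ι} {x y : ι → ℝ}
    (hx : x ∈ newtonPolyhedron S) (hy : y ∈ newtonPolyhedron S)
    {a b : ℝ} (ha : 0 < a) (hb : 0 < b) (hab : a + b = 1)
    (h : (a • x + b • y) i = (minCoord i S : ℝ)) :
    x ∈ newtonPolyhedron (minFace i S) ∧ y ∈ newtonPolyhedron (minFace i S) := by
  have hxi := newton_coord_ge hx i
  have hyi := newton_coord_ge hy i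
  have hcomb : a * x i + b * y i = (minCoord i S : ℝ) := by
    simpa using h
  obtain ⟨hxe, hye⟩ := combo_eq ha hb hab hxi hyi hcomb
  constructor
  · rcases mem_newton_iff.1 hx with ⟨c, hc, u, hu, rfl⟩
    have hci : c i = (minCoord i S : ℝ) := by
      have h1 := hull_coord_ge hc i
      have h2 := hu i
      have : c i + u i = (minCoord i S : ℝ) := hxe
      linarith
    exact mem_newton_iff.2 ⟨c, hull_face hc hci, u, hu, rfl⟩
  · rcases mem_newton_iff.1 hy with ⟨c, hc, u, hu, rfl⟩
    have hci : c i = (minCoord i S : ℝ) := by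
      have h1 := hull_coord_ge hc i
      have h2 := hu i
      have : c i + u i = (minCoord i S : ℝ) := hye
      linarith
    exact mem_newton_iff.2 ⟨c, hull_face hc hci, u, hu, rfl⟩

lemma key : ∀ (L : List ι) (S : Set (ι → ℕ)) {x y : ι → ℝ},
    x ∈ newtonPolyhedron S → y ∈ newtonPolyhedron S →
    ∀ {a b : ℝ}, 0 < a → 0 < b → a + b = 1 →
    (a • x + b • y) ∈ cst '' lexMinSet L S →
    x ∈ newtonPolyhedron (lexMinSet L S) ∧ y ∈ newtonPolyhedron (lexMinSet L S) := by
  intro L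
  induction L with
  | nil => intro S x y hx hy a b ha hb hab hmem; exact ⟨hx, hy⟩
  | cons i L ih =>
    intro S x y hx hy a b ha hb hab hmem
    have hcoor : (a • x + b • y) i = (minCoord i S : ℝ) := by
      obtain ⟨σ, hσ, hrfl⟩ := hmem
      have hσ' : σ ∈ minFace i S := lexMinSet_subset L _ hσ
      rw [← hrfl]
      show (σ i : ℝ) = (minCoord i S : ℝ)
      exact_mod_cast congrArg Nat.cast hσ'.2
    obtain ⟨hx', hy'⟩ := step hx hy ha hb hab hcoor
    exact ih (minFace i S) hx' hy' ha hb hab hmem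

/-- every element of a fully minimized set gives an extreme point. -/
lemma lexMin_extreme [Fintype ι] {S : Set (ι → ℕ)} (L : List ι) (hL : ∀ i : ι, i ∈ L)
    {σ : ι → ℕ} (hσ : σ ∈ lexMinSet L S) :
    cst σ ∈ Set.extremePoints ℝ (newtonPolyhedron S) := by
  refine mem_extremePoints.2 ⟨cst_mem_newton (lexMinSet_subset L S hσ), ?_⟩
  intro x₁ hx₁ x₂ hx₂ hseg
  obtain ⟨a, b, ha, hb, hab, habx⟩ := hseg
  have hmem : a • x₁ + b • x₂ ∈ cst '' lexMinSet L S := by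
    rw [habx]; exact ⟨σ, hσ, rfl⟩
  obtain ⟨h1, h2⟩ := key L S hx₁ hx₂ ha hb hab hmem
  -- lexMinSet L S ⊆ {σ}
  have hsub : lexMinSet L S ⊆ {σ} := by
    intro τ hτ
    have : τ = σ := by
      funext i
      exact lexMinSet_coord_eq L S (hL i) τ hτ σ hσ
    exact this
  have h1' := newton_mono hsub h1
  have h2' := newton_mono hsub h2
  -- N({σ}) = cst σ + orthant
  have hN : ∀ {z : ι → ℝ}, z ∈ newtonPolyhedron ({σ} : Set (ι → ℕ)) →
      ∀ i, cst σ i ≤ z i := by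
    intro z hz i
    rcases mem_newton_iff.1 hz with ⟨c, hc, u, hu, rfl⟩
    have : c ∈ convexHull ℝ {cst σ} := by
      simpa using hc
    rw [convexHull_singleton, Set.mem_singleton_iff] at this
    subst this
    have := hu i
    show cst σ i ≤ cst σ i + u i
    linarith
  have hg1 := hN h1'
  have hg2 := hN h2'
  have heq : ∀ i, x₁ i = cst σ i ∧ x₂ i = cst σ i := by
    intro i
    have h1i := hg1 i
    have h2i := hg2 i
    have : a * x₁ i + b * x₂ i = cst σ i := by
      have := congrFun habx i
      simpa using this
    exact combo_eq ha hb hab h1i h2i this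
  constructor
  · funext i; exact (heq i).1
  · funext i; exact (heq i).2

end NewtonAux

open NewtonAux in
/-- `N(S)` has `σ₀` as its single vertex (its set of extreme
points is `{σ₀}`) iff `σ₀ ∈ S` and `σ₀ ≤ σ` componentwise for all `σ ∈ S`;
moreover in that case `N(S) = σ₀ + ℝ≥0^ι`. -/
theorem single_vertex_iff_min_elt {ι : Type*} [Fintype ι]
    (S : Set (ι → ℕ)) (hS : S.Nonempty) (σ₀ : ι → ℕ) :
    (Set.extremePoints ℝ (newtonPolyhedron S) = {fun i => (σ₀ i : ℝ)} ↔
        σ₀ ∈ S ∧ ∀ σ ∈ S, ∀ i, σ₀ i ≤ σ i) ∧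
      ((σ₀ ∈ S ∧ ∀ σ ∈ S, ∀ i, σ₀ i ≤ σ i) →
        newtonPolyhedron S =
          (fun x : ι → ℝ => (fun i => (σ₀ i : ℝ)) + x) '' {x : ι → ℝ | ∀ i, 0 ≤ x i}) := by
  have hcst : (fun i => (σ₀ i : ℝ)) = cst σ₀ := rfl
  -- the "moreover" part, proven first
  have hmain : (σ₀ ∈ S ∧ ∀ σ ∈ S, ∀ i, σ₀ i ≤ σ i) →
      newtonPolyhedron S =
        (fun x : ι → ℝ => (fun i => (σ₀ i : ℝ)) + x) '' {x : ι → ℝ | ∀ i, 0 ≤ x i} := by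
    rintro ⟨h0, hmin⟩
    ext x
    constructor
    · intro hx
      rcases mem_newton_iff.1 hx with ⟨c, hc, u, hu, rfl⟩
      have hcge : ∀ i, cst σ₀ i ≤ c i := by
        intro i
        have hsub : convexHull ℝ (cst '' S) ⊆ {y : ι → ℝ | cst σ₀ i ≤ y i} := by
          apply convexHull_min
          · rintro _ ⟨σ, hσ, rfl⟩
            show (σ₀ i : ℝ) ≤ (σ i : ℝ)
            exact_mod_cast hmin σ hσ i
          · exact convex_halfSpace_ge ⟨fun x y => rfl, fun a x => rfl⟩ _
        exact hsub hc
      refine ⟨(c + u) - cst σ₀, ?_, by rw [hcst]; abel⟩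
      intro i
      have := hu i
      have := hcge i
      show 0 ≤ c i + u i - cst σ₀ i
      linarith
    · rintro ⟨u, hu, rfl⟩
      exact mem_newton_iff.2 ⟨cst σ₀, subset_convexHull ℝ _ ⟨σ₀, h0, rfl⟩, u, hu, rfl⟩
  refine ⟨⟨?_, ?_⟩, hmain⟩
  · -- forward direction
    intro hext
    -- σ₀ ∈ S via the lex-min extreme point
    have hLfull : ∀ i : ι, i ∈ (Finset.univ : Finset ι).toList :=
      fun i => by simp
    obtain ⟨σ₁, hσ₁⟩ := lexMinSet_nonempty (Finset.univ : Finset ι).toList hS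
    have hext1 := lexMin_extreme _ hLfull hσ₁
    rw [hext, Set.mem_singleton_iff, hcst] at hext1
    have hσ₁₀ : σ₁ = σ₀ := cst_inj hext1
    rw [hσ₁₀] at hσ₁
    refine ⟨lexMinSet_subset _ S hσ₁, ?_⟩
    intro τ hτ i
    -- use list with i first
    obtain ⟨σ₂, hσ₂⟩ := lexMinSet_nonempty (i :: (Finset.univ : Finset ι).toList) hS
    have hext2 := lexMin_extreme (i :: (Finset.univ : Finset ι).toList)
      (fun j => List.mem_cons_of_mem _ (hLfull j)) hσ₂
    rw [hext, Set.mem_singleton_iff, hcst] at hext2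
    have hσ₂₀ : σ₂ = σ₀ := cst_inj hext2
    have hface : σ₂ ∈ minFace i S := lexMinSet_subset _ _ hσ₂
    rw [hσ₂₀] at hface
    rw [hface.2]
    exact minCoord_le hτ
  · -- backward direction
    rintro ⟨h0, hmin⟩
    have hNeq := hmain ⟨h0, hmin⟩
    rw [hNeq]
    ext x
    simp only [Set.mem_singleton_iff]
    constructor
    · intro hx
      obtain ⟨hxmem, hxe⟩ := mem_extremePoints.1 hx
      obtain ⟨u, hu, hrfl⟩ := hxmem
      by_cases hu0 : u = 0
      · rw [← hrfl, hu0]; simp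
      · exfalso
        -- x is midpoint of σ₀ and σ₀ + 2u
        have hmem1 : (fun i => (σ₀ i : ℝ)) ∈
            (fun x : ι → ℝ => (fun i => (σ₀ i : ℝ)) + x) '' {x : ι → ℝ | ∀ i, 0 ≤ x i} :=
          ⟨0, fun i => le_refl 0, by simp⟩
        have hmem2 : ((fun i => (σ₀ i : ℝ)) + (2 : ℝ) • u) ∈
            (fun x : ι → ℝ => (fun i => (σ₀ i : ℝ)) + x) '' {x : ι → ℝ | ∀ i, 0 ≤ x i} :=
          ⟨(2 : ℝ) • u, fun i => by
            have := hu i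
            show (0:ℝ) ≤ 2 * u i
            linarith, rfl⟩
        have hseg : x ∈ openSegment ℝ (fun i => (σ₀ i : ℝ))
            ((fun i => (σ₀ i : ℝ)) + (2 : ℝ) • u) := by
          refine ⟨1/2, 1/2, by norm_num, by norm_num, by norm_num, ?_⟩
          rw [← hrfl]
          funext i
          show (1/2 : ℝ) * (σ₀ i : ℝ) + (1/2 : ℝ) * ((σ₀ i : ℝ) + 2 * u i)
              = (σ₀ i : ℝ) + u i
          ring
        have := (hxe _ hmem1 _ hmem2 hseg).1
        rw [← hrfl] at this
        have : ∀ i, u i = 0 := by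
          intro i
          have h := congrFun this i
          simp only [Pi.add_apply] at h
          linarith
        exact hu0 (funext this)
    · intro hx
      subst hx
      refine mem_extremePoints.2 ⟨⟨0, fun i => le_refl 0, by simp⟩, ?_⟩
      rintro x₁ ⟨u₁, hu₁, hrfl₁⟩ x₂ ⟨u₂, hu₂, hrfl₂⟩ ⟨a, b, ha, hb, hab, habx⟩
      have heq : ∀ i, u₁ i = 0 ∧ u₂ i = 0 := by
        intro i
        have h := congrFun habx i
        rw [← hrfl₁, ← hrfl₂] at h
        simp only [Pi.add_apply, Pi.smul_apply, smul_eq_mul] at h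
        have hu₁i := hu₁ i
        have hu₂i := hu₂ i
        have h' : a * ((σ₀ i : ℝ) + u₁ i) + b * ((σ₀ i : ℝ) + u₂ i) = (σ₀ i : ℝ) := by
          simpa using h
        have hc1 : (σ₀ i : ℝ) ≤ (σ₀ i : ℝ) + u₁ i := by linarith
        have hc2 : (σ₀ i : ℝ) ≤ (σ₀ i : ℝ) + u₂ i := by linarith
        obtain ⟨e1, e2⟩ := combo_eq ha hb hab hc1 hc2 h'
        constructor <;> linarith
      constructor
      · rw [← hrfl₁]
        funext i
        simp [(heq i).1]
      · rw [← hrfl₂]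
        funext i
        simp [(heq i).2]
end

section
/- Let K be a finite type, J ⊆ K nonempty, A ⊊ J a proper subset, and let K' be the index set (K \ J) ∪ A ∪ {∞}, where ∞ is a new element. Define φ_K^A on 𝒲_K^A by sending ρ (with associated value r = r_ρ > 0 such that ρ(e_j) = r for j ∈ J \ A and ρ(e_j) > r for j ∈ A) to the linear map ρ' : (K' → ℝ) → ℝ determined on standard basis vectors by ρ'(e_j) = ρ(e_j) for j ∈ K \ J, ρ'(e_j) = ρ(e_j) − r for j ∈ A, and ρ'(e_∞) = r. Then ρ' is a vector of weights on ℝ^{K'}, and φ_K^A is a bijection from 𝒲_K^A onto the set 𝒲_{K'} of all vectors of weights on ℝ^{K'}. -/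
set_option linter.unusedSectionVars false

section Aux
variable {ι : Type*} [Fintype ι] [DecidableEq ι]

lemma lmap_repr (L : (ι → ℝ) →ₗ[ℝ] ℝ) (σ : ι → ℝ) :
    L σ = ∑ i, σ i * L (Pi.single i 1) := by
  have hσ : σ = ∑ i, σ i • (Pi.single i 1 : ι → ℝ) := by
    funext j
    simp [Finset.sum_apply, Pi.single_apply]
  conv_lhs => rw [hσ]
  rw [map_sum]
  simp [smul_eq_mul]

lemma lmap_ext {L₁ L₂ : (ι → ℝ) →ₗ[ℝ] ℝ}
    (h : ∀ i, L₁ (Pi.single i 1) = L₂ (Pi.single i 1)) : L₁ = L₂ := by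
  refine LinearMap.ext fun σ => ?_
  rw [lmap_repr, lmap_repr]
  simp [h]

lemma isWeightVector_iff (L : (ι → ℝ) →ₗ[ℝ] ℝ) :
    IsWeightVector L ↔ ∀ i, 0 < L (Pi.single i 1) := by
  constructor
  · intro h i
    refine h _ (fun j => ?_) ?_
    · rcases eq_or_ne j i with rfl | hj
      · simp
      · simp [Pi.single_eq_of_ne hj]
    · intro h0
      have := congrFun h0 i
      simp at this
  · intro h σ hσ hne
    rw [lmap_repr]
    have hex : ∃ i, σ i ≠ 0 := by
      by_contra hc
      push_neg at hc
      exact hne (funext fun i => hc i)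
    obtain ⟨i, hi⟩ := hex
    refine Finset.sum_pos' (fun j _ => mul_nonneg (hσ j) (h j).le)
      ⟨i, Finset.mem_univ i, mul_pos ((hσ i).lt_of_ne hi.symm) (h i)⟩

end Aux

section Maps
variable {K : Type*} [Fintype K] [DecidableEq K]

noncomputable def Smap (J A : Finset K) (j0 : K) :
    (Option {k : K // k ∉ J ∨ k ∈ A} → ℝ) →ₗ[ℝ] (K → ℝ) :=
  LinearMap.pi fun k =>
    (if h : k ∉ J ∨ k ∈ A then LinearMap.proj (some ⟨k, h⟩) else 0) +
    (if k = j0 then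
      LinearMap.proj none - ∑ a ∈ A.attach, LinearMap.proj (some ⟨a.1, Or.inr a.2⟩)
    else 0)

lemma Smap_apply (J A : Finset K) (j0 : K) (σ : Option {k : K // k ∉ J ∨ k ∈ A} → ℝ) (k : K) :
    Smap J A j0 σ k =
      (if h : k ∉ J ∨ k ∈ A then σ (some ⟨k, h⟩) else 0) +
      (if k = j0 then σ none - ∑ a ∈ A.attach, σ (some ⟨a.1, Or.inr a.2⟩) else 0) := by
  simp [Smap, apply_dite (fun L : (Option {k : K // k ∉ J ∨ k ∈ A} → ℝ) →ₗ[ℝ] ℝ => L σ),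
    apply_ite (fun L : (Option {k : K // k ∉ J ∨ k ∈ A} → ℝ) →ₗ[ℝ] ℝ => L σ)]

lemma Smap_single_none (J A : Finset K) (j0 : K) :
    Smap J A j0 (Pi.single none 1) = Pi.single j0 1 := by
  funext k
  rw [Smap_apply]
  by_cases hk : k = j0 <;> simp [hk, Pi.single_apply]

lemma Smap_single_some (J A : Finset K) (j0 : K) (x : {k : K // k ∉ J ∨ k ∈ A}) :
    Smap J A j0 (Pi.single (some x) 1) =
      Pi.single (x : K) 1 - (if (x : K) ∈ A then Pi.single j0 1 else 0) := by
  funext k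
  rw [Smap_apply]
  have hsum : (∑ a ∈ A.attach, (Pi.single (some x) 1 : Option {k : K // k ∉ J ∨ k ∈ A} → ℝ)
      (some ⟨a.1, Or.inr a.2⟩)) = if (x : K) ∈ A then 1 else 0 := by
    have h1 : ∀ a ∈ A.attach, (Pi.single (some x) 1 : Option {k : K // k ∉ J ∨ k ∈ A} → ℝ)
        (some ⟨a.1, Or.inr a.2⟩) = if a.1 = (x:K) then 1 else 0 := by
      intro a _
      rw [Pi.single_apply]
      congr 1
      simp [Subtype.ext_iff]
    rw [Finset.sum_congr rfl h1]
    rw [Finset.sum_attach A (fun a => if a = (x:K) then (1:ℝ) else 0)]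
    rw [Finset.sum_ite_eq' A (x:K) (fun _ => (1:ℝ))]
  rw [hsum]
  by_cases h : k ∉ J ∨ k ∈ A
  · have hx : (Pi.single (some x) 1 : Option {k : K // k ∉ J ∨ k ∈ A} → ℝ) (some ⟨k, h⟩)
        = if k = (x:K) then 1 else 0 := by
      rw [Pi.single_apply]; congr 1; simp [Subtype.ext_iff]
    rw [dif_pos h, hx]
    by_cases hk : k = j0 <;> by_cases hkx : k = (x:K) <;> by_cases hxA : (x:K) ∈ A <;>
      simp [hk, hkx, hxA, Pi.single_apply] <;> split_ifs <;> simp_all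
  · have hkx : k ≠ (x:K) := by rintro rfl; exact h x.2
    rw [dif_neg h]
    by_cases hk : k = j0 <;> by_cases hxA : (x:K) ∈ A <;>
      simp [hk, hkx, hxA, Pi.single_apply, Ne.symm hkx] <;> (try split_ifs) <;> simp_all

noncomputable def Tmap (J A : Finset K) :
    (K → ℝ) →ₗ[ℝ] (Option {k : K // k ∉ J ∨ k ∈ A} → ℝ) :=
  LinearMap.pi fun x =>
    x.elim (∑ j ∈ J.attach, LinearMap.proj (j : K)) (fun y => LinearMap.proj (y : K))

lemma Tmap_apply_some (J A : Finset K) (σ : K → ℝ) (y : {k : K // k ∉ J ∨ k ∈ A}) :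
    Tmap J A σ (some y) = σ (y : K) := by
  simp [Tmap]

lemma Tmap_apply_none (J A : Finset K) (σ : K → ℝ) :
    Tmap J A σ none = ∑ j ∈ J.attach, σ (j : K) := by
  simp [Tmap]

lemma Tmap_none_single (J A : Finset K) (k : K) :
    Tmap J A (Pi.single k 1) none = if k ∈ J then 1 else 0 := by
  rw [Tmap_apply_none]
  have h1 : ∀ j ∈ J.attach, (Pi.single k 1 : K → ℝ) (j:K) = if (j:K) = k then 1 else 0 := by
    intro j _; rw [Pi.single_apply]
  rw [Finset.sum_congr rfl h1, Finset.sum_attach J (fun a => if a = k then (1:ℝ) else 0),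
    Finset.sum_ite_eq' J k (fun _ => (1:ℝ))]

lemma Tmap_single_notmem (J A : Finset K) {k : K} (hk : k ∉ J) :
    Tmap J A (Pi.single k 1) = Pi.single (some ⟨k, Or.inl hk⟩) 1 := by
  funext x
  cases x with
  | none =>
    rw [Tmap_none_single, if_neg hk]
    simp [Pi.single_apply]
  | some y =>
    rw [Tmap_apply_some, Pi.single_apply, Pi.single_apply]
    congr 1
    simp [Subtype.ext_iff]

lemma Tmap_single_mid (J A : Finset K) {k : K} (hk : k ∈ J) (hk' : k ∉ A) :
    Tmap J A (Pi.single k 1) = Pi.single none 1 := by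
  funext x
  cases x with
  | none => rw [Tmap_none_single, if_pos hk]; simp
  | some y =>
    rw [Tmap_apply_some, Pi.single_apply]
    have hy : (y:K) ≠ k := by
      rintro h
      rcases y.2 with h' | h' <;> rw [h] at h' <;> [exact h' hk; exact hk' h']
    simp [hy, Pi.single_apply]

lemma Tmap_single_A (J A : Finset K) {k : K} (hk : k ∈ A) (hkJ : k ∈ J) :
    Tmap J A (Pi.single k 1) =
      Pi.single (some ⟨k, Or.inr hk⟩) 1 + Pi.single none 1 := by
  funext x
  cases x with
  | none =>
    rw [Pi.add_apply, Tmap_none_single, if_pos hkJ]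
    simp [Pi.single_apply]
  | some y =>
    rw [Pi.add_apply, Tmap_apply_some, Pi.single_apply, Pi.single_apply, Pi.single_apply]
    have h2 : (some y = (some ⟨k, Or.inr hk⟩ : Option {k : K // k ∉ J ∨ k ∈ A}))
        ↔ ((y:K) = k) := by simp [Subtype.ext_iff]
    by_cases hy : (y:K) = k <;> simp [hy, h2]

end Maps

/-- Let `J ⊆ K` be nonempty, `A ⊊ J`, and let
`K' = (K \ J) ∪ A ∪ {∞}` (modelled as `Option {k : K // k ∉ J ∨ k ∈ A}`, with
`none` playing the role of `∞`).  The map `φ_K^A` sending `ρ ∈ 𝒲_K^A` (with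
associated value `r_ρ`) to the linear map `ρ'` on `ℝ^{K'}` determined on the
standard basis by `ρ'(e_j) = ρ(e_j)` for `j ∈ K \ J`, `ρ'(e_j) = ρ(e_j) - r_ρ`
for `j ∈ A`, and `ρ'(e_∞) = r_ρ`, takes values in the set of vectors of weights
on `ℝ^{K'}` and is a bijection from `𝒲_K^A` onto `𝒲_{K'}`. -/
theorem phi_bijection_weight_classes {K : Type*} [Fintype K] [DecidableEq K]
    (J A : Finset K) (hJ : J.Nonempty) (hA : A ⊂ J) :
    ∃ φ : ((K → ℝ) →ₗ[ℝ] ℝ) → ((Option {k : K // k ∉ J ∨ k ∈ A} → ℝ) →ₗ[ℝ] ℝ),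
      (∀ ρ : (K → ℝ) →ₗ[ℝ] ℝ, IsWeightVector ρ → ∀ r : ℝ, 0 < r →
        (∀ j ∈ J \ A, ρ (Pi.single j 1) = r) →
        (∀ j ∈ A, r < ρ (Pi.single j 1)) →
        (∀ k : {k : K // k ∉ J ∨ k ∈ A},
            ((k : K) ∉ J → φ ρ (Pi.single (some k) 1) = ρ (Pi.single (k : K) 1)) ∧
            ((k : K) ∈ A → φ ρ (Pi.single (some k) 1) = ρ (Pi.single (k : K) 1) - r)) ∧
          φ ρ (Pi.single none 1) = r) ∧
      Set.BijOn φ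
        {ρ | IsWeightVector ρ ∧ ∃ r : ℝ, 0 < r ∧
          (∀ j ∈ J \ A, ρ (Pi.single j 1) = r) ∧ (∀ j ∈ A, r < ρ (Pi.single j 1))}
        {ρ' | IsWeightVector ρ'} := by
  obtain ⟨j0, hj0J, hj0A⟩ := Finset.exists_of_ssubset hA
  have hj0 : j0 ∈ J \ A := Finset.mem_sdiff.2 ⟨hj0J, hj0A⟩
  have hAJ : A ⊆ J := hA.1
  refine ⟨fun ρ => ρ ∘ₗ Smap J A j0, ?_, ?_, ?_, ?_⟩
  · -- spec on basis vectors
    intro ρ hρ r hr h1 h2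
    have hrj : ρ (Pi.single j0 1) = r := h1 j0 hj0
    refine ⟨fun x => ⟨?_, ?_⟩, ?_⟩
    · intro hx
      have hxA : (x:K) ∉ A := fun h => hx (hAJ h)
      show (ρ ∘ₗ Smap J A j0) (Pi.single (some x) 1) = _
      rw [LinearMap.comp_apply, Smap_single_some, if_neg hxA, sub_zero]
    · intro hx
      show (ρ ∘ₗ Smap J A j0) (Pi.single (some x) 1) = _
      rw [LinearMap.comp_apply, Smap_single_some, if_pos hx, map_sub, hrj]
    · show (ρ ∘ₗ Smap J A j0) (Pi.single none 1) = r
      rw [LinearMap.comp_apply, Smap_single_none, hrj]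
  · -- MapsTo
    rintro ρ ⟨hρ, r, hr, h1, h2⟩
    have hrj : ρ (Pi.single j0 1) = r := h1 j0 hj0
    show IsWeightVector (ρ ∘ₗ Smap J A j0)
    rw [isWeightVector_iff]
    intro x
    cases x with
    | none =>
      rw [LinearMap.comp_apply, Smap_single_none, hrj]; exact hr
    | some y =>
      by_cases hy : (y:K) ∈ A
      · rw [LinearMap.comp_apply, Smap_single_some, if_pos hy, map_sub, hrj]
        exact sub_pos.2 (h2 _ hy)
      · rw [LinearMap.comp_apply, Smap_single_some, if_neg hy, sub_zero]
        exact (isWeightVector_iff ρ).1 hρ _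
  · -- InjOn
    rintro ρ₁ ⟨hρ₁, r₁, hr₁, ha₁, hb₁⟩ ρ₂ ⟨hρ₂, r₂, hr₂, ha₂, hb₂⟩ heq
    have heq' : ρ₁ ∘ₗ Smap J A j0 = ρ₂ ∘ₗ Smap J A j0 := heq
    have hr12 : r₁ = r₂ := by
      have h := congrArg (fun L => L (Pi.single none 1)) heq'
      simpa [LinearMap.comp_apply, Smap_single_none, ha₁ j0 hj0, ha₂ j0 hj0] using h
    refine lmap_ext fun k => ?_
    by_cases hkA : k ∈ A
    · have h := congrArg (fun L => L (Pi.single (some ⟨k, Or.inr hkA⟩) 1)) heq'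
      simp only [LinearMap.comp_apply, Smap_single_some, if_pos hkA, map_sub,
        ha₁ j0 hj0, ha₂ j0 hj0] at h
      have h' : ρ₁ (Pi.single k 1) - r₁ = ρ₂ (Pi.single k 1) - r₂ := h
      linarith
    · by_cases hkJ : k ∈ J
      · rw [ha₁ k (Finset.mem_sdiff.2 ⟨hkJ, hkA⟩), ha₂ k (Finset.mem_sdiff.2 ⟨hkJ, hkA⟩), hr12]
      · have h := congrArg (fun L => L (Pi.single (some ⟨k, Or.inl hkJ⟩) 1)) heq'
        simpa [LinearMap.comp_apply, Smap_single_some, hkA] using h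
  · -- SurjOn
    rintro ρ' hρ'
    have hpos := (isWeightVector_iff ρ').1 hρ'
    set ψ : (K → ℝ) →ₗ[ℝ] ℝ := ρ' ∘ₗ Tmap J A with hψ
    set r : ℝ := ρ' (Pi.single none 1) with hrdef
    have bk_not : ∀ k, (hk : k ∉ J) → ψ (Pi.single k 1) = ρ' (Pi.single (some ⟨k, Or.inl hk⟩) 1) := by
      intro k hk
      rw [hψ, LinearMap.comp_apply, Tmap_single_notmem J A hk]
    have bk_mid : ∀ k, k ∈ J → k ∉ A → ψ (Pi.single k 1) = r := by
      intro k hk hk'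
      rw [hψ, LinearMap.comp_apply, Tmap_single_mid J A hk hk']
    have bk_A : ∀ k, (hk : k ∈ A) → ψ (Pi.single k 1) = ρ' (Pi.single (some ⟨k, Or.inr hk⟩) 1) + r := by
      intro k hk
      rw [hψ, LinearMap.comp_apply, Tmap_single_A J A hk (hAJ hk), map_add]
    refine ⟨ψ, ⟨?_, r, hpos none, ?_, ?_⟩, ?_⟩
    · rw [isWeightVector_iff]
      intro k
      by_cases hkA : k ∈ A
      · rw [bk_A k hkA]
        have := hpos (some ⟨k, Or.inr hkA⟩)
        have := hpos none
        linarith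
      · by_cases hkJ : k ∈ J
        · rw [bk_mid k hkJ hkA]; exact hpos none
        · rw [bk_not k hkJ]; exact hpos _
    · intro j hj
      obtain ⟨hjJ, hjA⟩ := Finset.mem_sdiff.1 hj
      exact bk_mid j hjJ hjA
    · intro j hj
      rw [bk_A j hj]
      have := hpos (some ⟨j, Or.inr hj⟩)
      linarith
    · show ψ ∘ₗ Smap J A j0 = ρ'
      refine lmap_ext fun x => ?_
      cases x with
      | none =>
        rw [LinearMap.comp_apply, Smap_single_none, bk_mid j0 hj0J hj0A]
      | some y =>
        by_cases hy : (y:K) ∈ A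
        · rw [LinearMap.comp_apply, Smap_single_some, if_pos hy, map_sub,
            bk_A _ hy, bk_mid j0 hj0J hj0A]
          have hyy : (⟨(y:K), Or.inr hy⟩ : {k : K // k ∉ J ∨ k ∈ A}) = y := Subtype.ext rfl
          rw [hyy]
          ring
        · have hyJ : (y:K) ∉ J := by
            rcases y.2 with h' | h'
            · exact h'
            · exact absurd h' hy
          rw [LinearMap.comp_apply, Smap_single_some, if_neg hy, sub_zero, bk_not _ hyJ]
end
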